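/- arXiv:1710.03223 — 8 statements merged into one kernel-verified Lean document; each statement's English description precedes it below -/
import Mathlib

section
/- Let v1, v2, v3 be vectors in ℕ^n. For i ≠ j define MIN(v_i, v_j) = +∞ (as an element of ℕ∞) if v_i = v_j, and otherwise MIN(v_i, v_j) = min over all coordinates k with v_i[k] ≠ v_j[k] of min(v_i[k], v_j[k]). Then there exists a permutation δ of {1,2,3} such that MIN(v_{δ(1)}, v_{δ(2)}) = MIN(v_{δ(2)}, v_{δ(3)}) ≤ MIN(v_{δ(1)}, v_{δ(3)}). -/
/-!
`MIN` satisfies the ultrametric inequality `min (MIN a b) (MIN b c) ≤ MIN a c`: at a coordinate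
where `a` and `c` differ, `b` differs from `a` or from `c`, and the corresponding pair has a
minimum at most `min (a k) (c k)` there. In an ultrametric every triangle is isosceles with its
two shortest sides equal, so ordering the three points with the longest side between the first
and the last one gives the permutation.
-/

/-- `MIN v w` : `⊤` if `v = w`, otherwise the minimum over coordinates `k` with
`v k ≠ w k` of `min (v k) (w k)`, as an element of `ℕ∞`. -/
noncomputable def MIN {n : ℕ} (v w : Fin n → ℕ) : ℕ∞ :=
  sInf {x : ℕ∞ | ∃ k : Fin n, v k ≠ w k ∧ x = ((min (v k) (w k) : ℕ) : ℕ∞)}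

section Isosceles

variable {α β : Type*} [LinearOrder β] {d : α → α → β}

theorem eq_of_le_of_le_of_ultrametric (hcomm : ∀ a b, d a b = d b a)
    (hd : ∀ a b c, min (d a b) (d b c) ≤ d a c) {a b c : α}
    (hab : d a b ≤ d a c) (hbc : d b c ≤ d a c) : d a b = d b c := by
  apply le_antisymm
  · simpa [hcomm b a, min_eq_left hab] using hd b a c
  · simpa [hcomm c b, hcomm c a, min_eq_right hbc] using hd a c b

theorem exists_perm_isosceles_of_ultrametric (hcomm : ∀ a b, d a b = d b a)
    (hd : ∀ a b c, min (d a b) (d b c) ≤ d a c) (v : Fin 3 → α) :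
    ∃ δ : Equiv.Perm (Fin 3),
      d (v (δ 0)) (v (δ 1)) = d (v (δ 1)) (v (δ 2)) ∧
      d (v (δ 1)) (v (δ 2)) ≤ d (v (δ 0)) (v (δ 2)) := by
  suffices h : ∃ δ : Equiv.Perm (Fin 3),
      d (v (δ 0)) (v (δ 1)) ≤ d (v (δ 0)) (v (δ 2)) ∧
      d (v (δ 1)) (v (δ 2)) ≤ d (v (δ 0)) (v (δ 2)) by
    obtain ⟨δ, h01, h12⟩ := h
    exact ⟨δ, eq_of_le_of_le_of_ultrametric hcomm hd h01 h12, h12⟩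
  obtain h | h | h :
      (d (v 0) (v 1) ≤ d (v 0) (v 2) ∧ d (v 1) (v 2) ≤ d (v 0) (v 2)) ∨
      (d (v 0) (v 1) ≤ d (v 1) (v 2) ∧ d (v 0) (v 2) ≤ d (v 1) (v 2)) ∨
      (d (v 0) (v 2) ≤ d (v 0) (v 1) ∧ d (v 1) (v 2) ≤ d (v 0) (v 1)) := by grind
  · exact ⟨1, h⟩
  · exact ⟨Equiv.swap 0 1, by simpa [Equiv.swap_apply_of_ne_of_ne, hcomm (v 1) (v 0)] using h⟩
  · exact ⟨Equiv.swap 1 2, by simpa [Equiv.swap_apply_of_ne_of_ne, hcomm (v 2) (v 1)] using h⟩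

end Isosceles

lemma MIN_comm {n : ℕ} (v w : Fin n → ℕ) : MIN v w = MIN w v := by
  simp only [MIN, ne_comm, min_comm]

lemma min_MIN_le {n : ℕ} (a b c : Fin n → ℕ) : min (MIN a b) (MIN b c) ≤ MIN a c := by
  refine le_sInf ?_
  rintro _ ⟨k, hac, rfl⟩
  obtain ⟨hab, hle⟩ | ⟨hbc, hle⟩ : (a k ≠ b k ∧ min (a k) (b k) ≤ min (a k) (c k)) ∨
      (b k ≠ c k ∧ min (b k) (c k) ≤ min (a k) (c k)) := by omega
  · calc min (MIN a b) (MIN b c) ≤ MIN a b := min_le_left _ _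
      _ ≤ min (a k) (b k) := sInf_le ⟨k, hab, rfl⟩
      _ ≤ min (a k) (c k) := by exact_mod_cast hle
  · calc min (MIN a b) (MIN b c) ≤ MIN b c := min_le_right _ _
      _ ≤ min (b k) (c k) := sInf_le ⟨k, hbc, rfl⟩
      _ ≤ min (a k) (c k) := by exact_mod_cast hle

theorem stmt_0 {n : ℕ} (v : Fin 3 → (Fin n → ℕ)) :
    ∃ δ : Equiv.Perm (Fin 3),
      MIN (v (δ 0)) (v (δ 1)) = MIN (v (δ 1)) (v (δ 2)) ∧
      MIN (v (δ 1)) (v (δ 2)) ≤ MIN (v (δ 0)) (v (δ 2)) :=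
  exists_perm_isosceles_of_ultrametric MIN_comm min_MIN_le v
end

section
/- Given a vector d ∈ ℕ^n, n ≥ 1, call a finite set G ⊆ ℕ^(n+1) a solution for d if for all 1 ≤ i < j ≤ n+1, the set {g ∈ G : g[i] ≠ g[j]} is nonempty and min over g in this set of min(g[i], g[j]) equals min(d_i, ..., d_{j-1}). Then for every d ∈ ℕ^n there exists a solution G for d with |G| ≤ ⌈log₂(n+1)⌉. -/
/-!
For `x ≤ y` let `B x y = min (d x, …, d (y - 1))`; it satisfies `min (B x y) (B y z) ≤ B x z`.
For such a `B` on a finite set `S` with `#S ≤ 2 ^ q`, let `μ` be its least value on `S`. The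
relation `μ < B x y` splits `S` into at least two clusters, with `B x y = μ` across clusters.
Give every cluster its own set `P` of coordinates, put the value `μ` on all its points at the
coordinates in `P`, and realize `B` inside the cluster recursively with the other coordinates,
where all values stay above `μ`. This needs `#cluster ≤ 2 ^ (q - #P)`. Such sets exist: the
`m`-th largest cluster has at most `2 ^ q / (m + 1)` points, and the binary digits of `m` form a
set `P` with `2 ^ #P ≤ m + 1`.
-/

/-- The minimum of `min (g i) (g j)` over the vectors `g ∈ G` with `g i ≠ g j`. -/
noncomputable def solMin (n : ℕ) (G : Finset (Fin (n + 1) → ℕ)) (i j : Fin (n + 1)) : ℕ :=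
  sInf {x : ℕ | ∃ g ∈ G, g i ≠ g j ∧ x = min (g i) (g j)}

/-- `min (d i, …, d (j-1))` for `i < j` in `Fin (n+1)`. -/
noncomputable def dMin (n : ℕ) (d : Fin n → ℕ) (i j : Fin (n + 1)) : ℕ :=
  sInf {x : ℕ | ∃ k : Fin n, (i : ℕ) ≤ (k : ℕ) ∧ (k : ℕ) < (j : ℕ) ∧ x = d k}

/-- `G` is a solution for the vector `d`. -/
def IsSolution (n : ℕ) (d : Fin n → ℕ) (G : Finset (Fin (n + 1) → ℕ)) : Prop :=
  ∀ i j : Fin (n + 1), i < j →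
    (∃ g ∈ G, g i ≠ g j) ∧ solMin n G i j = dMin n d i j

open Finset

section Kraft

variable {ι α : Type*} [DecidableEq α]

theorem exists_injOn_two_pow_card_le_succ (Q : Finset α) :
    ∃ code : ℕ → Finset α, Set.InjOn code (Set.Iio (2 ^ #Q)) ∧
      ∀ m < 2 ^ #Q, code m ⊆ Q ∧ 2 ^ #(code m) ≤ m + 1 := by
  induction Q using Finset.induction_on with
  | empty =>
    refine ⟨fun _ => ∅, fun m hm m' hm' _ => ?_, fun m _ => by simp⟩
    simp only [card_empty, pow_zero, Set.mem_Iio] at hm hm'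
    omega
  | insert a Q ha ih =>
    obtain ⟨code, hinj, hcode⟩ := ih
    have ha' : ∀ m < 2 ^ #Q, a ∉ code m := fun m hm h => ha ((hcode m hm).1 h)
    refine ⟨fun m => if m < 2 ^ #Q then code m else insert a (code (m - 2 ^ #Q)), ?_, ?_⟩
    · intro m hm m' hm' h
      simp only [Set.mem_Iio, card_insert_of_notMem ha, pow_succ] at hm hm'
      dsimp only at h
      split_ifs at h with h₁ h₂ h₂
      · exact hinj h₁ h₂ h
      · exact absurd (h ▸ mem_insert_self a _) (ha' m h₁)
      · exact absurd (h ▸ mem_insert_self a _) (ha' m' h₂)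
      · have hcode_eq : code (m - 2 ^ #Q) = code (m' - 2 ^ #Q) := by
          rw [← erase_insert (ha' _ (by omega)), h, erase_insert (ha' _ (by omega))]
        have := hinj (Set.mem_Iio.2 (by omega)) (Set.mem_Iio.2 (by omega)) hcode_eq
        omega
    · intro m hm
      rw [card_insert_of_notMem ha, pow_succ] at hm
      dsimp only
      split_ifs with h
      · exact ⟨(hcode m h).1.trans (subset_insert a Q), (hcode m h).2⟩
      · obtain ⟨hsub, hle⟩ := hcode (m - 2 ^ #Q) (by omega)
        refine ⟨insert_subset_insert a hsub, ?_⟩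
        rw [card_insert_of_notMem (ha' _ (by omega)), pow_succ]
        omega

theorem exists_injOn_rank (I : Finset ι) (s : ι → ℕ) :
    ∃ ρ : ι → ℕ, Set.InjOn ρ I ∧ ∀ i ∈ I, ρ i < #I ∧ (ρ i + 1) * s i ≤ ∑ j ∈ I, s j := by
  classical
  induction I using Finset.induction_on_min_value s with
  | empty => exact ⟨fun _ => 0, by simp, by simp⟩
  | insert a I ha hmin ih =>
    obtain ⟨ρ, hinj, hρ⟩ := ih
    have hne : ∀ i ∈ I, i ≠ a := fun i hi h => ha (h ▸ hi)
    have hsum : #I * s a ≤ ∑ j ∈ I, s j := by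
      simpa using card_nsmul_le_sum I s (s a) hmin
    refine ⟨Function.update ρ a #I, ?_, ?_⟩
    · intro x hx y hy h
      simp only [coe_insert, Set.mem_insert_iff, mem_coe] at hx hy
      rcases hx with rfl | hx <;> rcases hy with rfl | hy
      · rfl
      · simp only [Function.update_self, Function.update_of_ne (hne y hy)] at h
        exact absurd h ((hρ y hy).1.ne')
      · simp only [Function.update_self, Function.update_of_ne (hne x hx)] at h
        exact absurd h ((hρ x hx).1.ne)
      · simp only [Function.update_of_ne (hne x hx), Function.update_of_ne (hne y hy)] at h
        exact hinj hx hy h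
    · intro i hi
      rw [card_insert_of_notMem ha, sum_insert ha]
      rcases mem_insert.1 hi with rfl | hi
      · rw [Function.update_self]
        constructor <;> nlinarith
      · rw [Function.update_of_ne (hne i hi)]
        constructor <;> linarith [hρ i hi]

theorem exists_injOn_subset_le_two_pow_card_sdiff (I : Finset ι) (s : ι → ℕ)
    (hs : ∀ i ∈ I, 0 < s i) (Q : Finset α) (h : ∑ i ∈ I, s i ≤ 2 ^ #Q) :
    ∃ P : ι → Finset α, Set.InjOn P I ∧ ∀ i ∈ I, P i ⊆ Q ∧ s i ≤ 2 ^ #(Q \ P i) := by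
  obtain ⟨ρ, hρinj, hρ⟩ := exists_injOn_rank I s
  obtain ⟨code, hcinj, hcode⟩ := exists_injOn_two_pow_card_le_succ Q
  have hρQ : ∀ i ∈ I, (ρ i + 1) * s i ≤ 2 ^ #Q := fun i hi => (hρ i hi).2.trans h
  have hlt : ∀ i ∈ I, ρ i < 2 ^ #Q := fun i hi => by nlinarith [hρQ i hi, hs i hi]
  refine ⟨code ∘ ρ, fun i hi j hj hij => hρinj hi hj (hcinj (hlt i hi) (hlt j hj) hij),
    fun i hi => ⟨(hcode _ (hlt i hi)).1, ?_⟩⟩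
  obtain ⟨hsub, hcard⟩ := hcode _ (hlt i hi)
  have hle : s i * 2 ^ #(code (ρ i)) ≤ 2 ^ #(Q \ code (ρ i)) * 2 ^ #(code (ρ i)) := by
    rw [card_sdiff_of_subset hsub, pow_sub_mul_pow 2 (card_le_card hsub)]
    calc s i * 2 ^ #(code (ρ i)) ≤ s i * (ρ i + 1) := Nat.mul_le_mul_left _ hcard
      _ ≤ 2 ^ #Q := by linarith [hρQ i hi]
  exact Nat.le_of_mul_le_mul_right hle (by positivity)

end Kraft

variable {α β γ : Type*} [LinearOrder γ]

structure IsUltrametricSimilarity (B : β → β → γ) : Prop where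
  symm : ∀ x y, B x y = B y x
  min_le : ∀ x y z, min (B x y) (B y z) ≤ B x z
  lt_diag : ∀ x y, x ≠ y → B x y < B x x

structure IsMinRealization (B : β → β → γ) (S : Finset β) (Q : Finset α) (f : α → β → γ) :
    Prop where
  eq_row : ∀ t, ∀ x ∈ S, ∃ y ∈ S, f t x = B x y
  le_of_ne : ∀ t, ∀ x ∈ S, ∀ y ∈ S, f t x ≠ f t y → B x y ≤ f t x
  exists_min_eq : ∀ x ∈ S, ∀ y ∈ S, x ≠ y →
    ∃ t ∈ Q, f t x ≠ f t y ∧ min (f t x) (f t y) = B x y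

theorem isMinRealization_of_card_le_one {B : β → β → γ} {S : Finset β} (Q : Finset α)
    (hS : #S ≤ 1) :
    IsMinRealization B S Q fun _ x => B x x where
  eq_row _ x hx := ⟨x, hx, rfl⟩
  le_of_ne _ x hx y hy h := absurd (by rw [card_le_one.1 hS x hx y hy]) h
  exists_min_eq x hx y hy h := absurd (card_le_one.1 hS x hx y hy) h

def cluster (B : β → β → γ) (S : Finset β) (μ : γ) (x : β) : Finset β :=
  S.filter fun y => μ < B x y

structure IsMinLevel (B : β → β → γ) (S : Finset β) (μ : γ) : Prop where
  le : ∀ x ∈ S, ∀ y ∈ S, x ≠ y → μ ≤ B x y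
  exists_ne_eq : ∀ x ∈ S, ∃ y ∈ S, x ≠ y ∧ B x y = μ

theorem IsUltrametricSimilarity.exists_isMinLevel {B : β → β → γ}
    (hB : IsUltrametricSimilarity B) {S : Finset β} (hS : 1 < #S) : ∃ μ, IsMinLevel B S μ := by
  obtain ⟨a, ha, b, hb, hab⟩ := one_lt_card.1 hS
  obtain ⟨⟨p, q⟩, hpq, hmin⟩ := exists_min_image S.offDiag (fun x => B x.1 x.2)
    ⟨(a, b), mem_offDiag.2 ⟨ha, hb, hab⟩⟩
  obtain ⟨hp, hq, hpq⟩ := mem_offDiag.1 hpq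
  have hle : ∀ x ∈ S, ∀ y ∈ S, x ≠ y → B p q ≤ B x y :=
    fun x hx y hy hxy => hmin (x, y) (mem_offDiag.2 ⟨hx, hy, hxy⟩)
  refine ⟨B p q, hle, fun x hx => ?_⟩
  have hpartner : ∀ y ∈ S, B x y ≤ B p q → ∃ y ∈ S, x ≠ y ∧ B x y = B p q := by
    intro y hy hxy_le
    have hxy : x ≠ y := by
      rintro rfl
      obtain ⟨z, hz, hxz⟩ : ∃ z ∈ S, x ≠ z := by
        by_cases hxp : x = p
        · exact ⟨q, hq, hxp ▸ hpq⟩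
        · exact ⟨p, hp, hxp⟩
      exact (hle x hx z hz hxz).not_gt ((hB.lt_diag x z hxz).trans_le hxy_le)
    exact ⟨y, hy, hxy, le_antisymm hxy_le (hle x hx y hy hxy)⟩
  -- Both `B x p` and `B x q` exceeding `B p q` would contradict `min (B p x) (B x q) ≤ B p q`.
  rcases le_or_gt (B x p) (B p q) with hxp | hxp
  · exact hpartner p hp hxp
  rcases le_or_gt (B x q) (B p q) with hxq | hxq
  · exact hpartner q hq hxq
  exact absurd (hB.min_le p x q) (lt_min (hB.symm x p ▸ hxp) hxq).not_ge

section cluster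

variable {B : β → β → γ} {S : Finset β} {μ : γ} {x y : β}

theorem mem_cluster : y ∈ cluster B S μ x ↔ y ∈ S ∧ μ < B x y := mem_filter

theorem cluster_eq_of_mem (hB : IsUltrametricSimilarity B) (h : y ∈ cluster B S μ x) :
    cluster B S μ y = cluster B S μ x := by
  have hxy := (mem_cluster.1 h).2
  ext z
  simp only [mem_cluster, and_congr_right_iff]
  refine fun _ => ⟨fun hyz => ?_, fun hxz => ?_⟩
  · exact (lt_min hxy hyz).trans_le (hB.min_le x y z)
  · exact (lt_min (hB.symm x y ▸ hxy) hxz).trans_le (hB.min_le y x z)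

theorem self_mem_cluster (hB : IsUltrametricSimilarity B) (hμ : IsMinLevel B S μ)
    (hx : x ∈ S) : x ∈ cluster B S μ x := by
  obtain ⟨y, -, hxy, rfl⟩ := hμ.exists_ne_eq x hx
  exact mem_cluster.2 ⟨hx, hB.lt_diag x y hxy⟩

theorem cluster_ssubset (hμ : IsMinLevel B S μ) (hx : x ∈ S) : cluster B S μ x ⊂ S := by
  obtain ⟨y, hy, -, hxy⟩ := hμ.exists_ne_eq x hx
  refine ssubset_of_subset_of_ne (filter_subset _ _) fun h => ?_
  rw [← h, mem_cluster] at hy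
  exact hy.2.ne' hxy

theorem cluster_eq_cluster_iff (hB : IsUltrametricSimilarity B) (hμ : IsMinLevel B S μ)
    (hy : y ∈ S) : cluster B S μ y = cluster B S μ x ↔ y ∈ cluster B S μ x :=
  ⟨fun h => h ▸ self_mem_cluster hB hμ hy, cluster_eq_of_mem hB⟩

theorem eq_of_cluster_ne (hB : IsUltrametricSimilarity B) (hμ : IsMinLevel B S μ)
    (hx : x ∈ S) (hy : y ∈ S) (h : cluster B S μ y ≠ cluster B S μ x) : B x y = μ := by
  refine le_antisymm ?_ (hμ.le x hx y hy fun hxy => h (by rw [hxy]))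
  by_contra hlt
  exact h ((cluster_eq_cluster_iff hB hμ hy).2 (mem_cluster.2 ⟨hy, not_le.1 hlt⟩))

theorem sum_card_cluster [DecidableEq β] (hB : IsUltrametricSimilarity B)
    (hμ : IsMinLevel B S μ) : ∑ c ∈ S.image (cluster B S μ), #c = #S := by
  rw [card_eq_sum_card_image (cluster B S μ) S]
  refine sum_congr rfl fun c hc => ?_
  obtain ⟨x, -, rfl⟩ := mem_image.1 hc
  refine congrArg card (ext fun y => Iff.symm ?_)
  exact (mem_filter (p := fun a => cluster B S μ a = cluster B S μ x)).trans
    ⟨fun h => (cluster_eq_cluster_iff hB hμ h.1).1 h.2,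
      fun h => ⟨(mem_cluster.1 h).1, cluster_eq_of_mem hB h⟩⟩

end cluster

theorem isMinRealization_of_clusters [DecidableEq α] {B : β → β → γ} {S : Finset β} {μ : γ}
    (hB : IsUltrametricSimilarity B) (hμ : IsMinLevel B S μ) {Q : Finset α}
    {P : Finset β → Finset α} {F : Finset β → α → β → γ}
    (hPinj : ∀ x ∈ S, ∀ y ∈ S, P (cluster B S μ x) = P (cluster B S μ y) →
      cluster B S μ x = cluster B S μ y)
    (hPQ : ∀ x ∈ S, P (cluster B S μ x) ⊆ Q)
    (hF : ∀ x ∈ S, IsMinRealization B (cluster B S μ x) (Q \ P (cluster B S μ x))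
      (F (cluster B S μ x))) :
    IsMinRealization B S Q fun t x =>
      if t ∈ P (cluster B S μ x) then μ else F (cluster B S μ x) t x := by
  set c := cluster B S μ
  set f := fun t x => if t ∈ P (c x) then μ else F (c x) t x
  have hself : ∀ x ∈ S, x ∈ c x := fun x hx => self_mem_cluster hB hμ hx
  have hFgt : ∀ t, ∀ x ∈ S, μ < F (c x) t x := fun t x hx => by
    obtain ⟨y, hy, h⟩ := (hF x hx).eq_row t x (hself x hx)
    exact h ▸ (mem_cluster.1 hy).2
  have hcross : ∀ x ∈ S, ∀ y ∈ S, c y ≠ c x → ∀ t ∈ P (c x), t ∉ P (c y) →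
      f t x ≠ f t y ∧ min (f t x) (f t y) = B x y := fun x hx y hy hc t htx hty => by
    simp only [f, if_pos htx, if_neg hty, eq_of_cluster_ne hB hμ hx hy hc]
    exact ⟨(hFgt t y hy).ne, min_eq_left (hFgt t y hy).le⟩
  refine ⟨fun t x hx => ?_, fun t x hx y hy hne => ?_, fun x hx y hy hxy => ?_⟩
  · by_cases ht : t ∈ P (c x)
    · obtain ⟨y, hy, -, h⟩ := hμ.exists_ne_eq x hx
      exact ⟨y, hy, by simp only [f, if_pos ht, h]⟩
    · obtain ⟨y, hy, h⟩ := (hF x hx).eq_row t x (hself x hx)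
      exact ⟨y, (mem_cluster.1 hy).1, by simp only [f, if_neg ht, h]⟩
  · by_cases hc : c y = c x
    · simp only [f, hc] at hne ⊢
      split_ifs at hne ⊢ with ht
      · exact absurd rfl hne
      · exact (hF x hx).le_of_ne t x (hself x hx) y (hc ▸ hself y hy) hne
    · rw [eq_of_cluster_ne hB hμ hx hy hc]
      by_cases ht : t ∈ P (c x)
      · simp only [f, if_pos ht, le_refl]
      · simp only [f, if_neg ht]
        exact (hFgt t x hx).le
  · by_cases hc : c y = c x
    · obtain ⟨t, ht, hne, hmin⟩ :=
        (hF x hx).exists_min_eq x (hself x hx) y (hc ▸ hself y hy) hxy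
      obtain ⟨htQ, htP⟩ := mem_sdiff.1 ht
      exact ⟨t, htQ, by simpa only [f, hc, if_neg htP] using ⟨hne, hmin⟩⟩
    · obtain ⟨t, ht⟩ := symmDiff_nonempty.2 fun h => hc (hPinj y hy x hx h.symm)
      rcases mem_symmDiff.1 ht with ⟨htx, hty⟩ | ⟨hty, htx⟩
      · exact ⟨t, hPQ x hx htx, hcross x hx y hy hc t htx hty⟩
      · obtain ⟨hne, hmin⟩ := hcross y hy x hx (Ne.symm hc) t hty htx
        exact ⟨t, hPQ y hy hty, hne.symm, by rw [min_comm, hmin, hB.symm]⟩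

theorem exists_isMinRealization [DecidableEq α] [DecidableEq β] {B : β → β → γ}
    (hB : IsUltrametricSimilarity B) (S : Finset β) (Q : Finset α) (hS : #S ≤ 2 ^ #Q) :
    ∃ f : α → β → γ, IsMinRealization B S Q f := by
  induction S using Finset.strongInduction generalizing Q with
  | H S ih =>
  rcases le_or_gt #S 1 with hS1 | hS1
  · exact ⟨_, isMinRealization_of_card_le_one Q hS1⟩
  obtain ⟨μ, hμ⟩ := hB.exists_isMinLevel hS1
  set c := cluster B S μ
  obtain ⟨P, hPinj, hP⟩ := exists_injOn_subset_le_two_pow_card_sdiff (S.image c) card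
    (fun _ hc => by
      obtain ⟨x, hx, rfl⟩ := mem_image.1 hc
      exact card_pos.2 ⟨x, self_mem_cluster hB hμ hx⟩)
    Q (by rwa [sum_card_cluster hB hμ])
  have hF : ∀ C ∈ S.image c, ∃ F, IsMinRealization B C (Q \ P C) F := fun C hC => by
    obtain ⟨x, hx, rfl⟩ := mem_image.1 hC
    exact ih _ (cluster_ssubset hμ hx) _ (hP _ hC).2
  have : Nonempty γ := ⟨μ⟩
  choose! F hF using hF
  exact ⟨_, isMinRealization_of_clusters hB hμ
    (fun x hx y hy h => hPinj (mem_image_of_mem c hx) (mem_image_of_mem c hy) h)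
    (fun x hx => (hP _ (mem_image_of_mem c hx)).1) (fun x hx => hF _ (mem_image_of_mem c hx))⟩

-- `C` is the value on the diagonal, where the range of edges is empty.
def bottleneck (w : ℕ → ℕ) (C x y : ℕ) : ℕ :=
  (Ico (min x y) (max x y)).fold min C w

theorem isUltrametricSimilarity_bottleneck {w : ℕ → ℕ} {C : ℕ} (hw : ∀ k, w k < C) :
    IsUltrametricSimilarity (bottleneck w C) where
  symm x y := by rw [bottleneck, bottleneck, min_comm, max_comm]
  min_le x y z := by
    refine (le_fold_min _).2
      ⟨min_le_of_left_le ((fold_min_le _).2 (Or.inl le_rfl)), fun k hk => ?_⟩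
    by_cases hxy : k ∈ Ico (min x y) (max x y)
    · exact min_le_of_left_le ((fold_min_le _).2 (Or.inr ⟨k, hxy, le_rfl⟩))
    · have hyz : k ∈ Ico (min y z) (max y z) := by rw [mem_Ico] at hk hxy ⊢; omega
      exact min_le_of_right_le ((fold_min_le _).2 (Or.inr ⟨k, hyz, le_rfl⟩))
  lt_diag x y hxy := by
    have hmem : min x y ∈ Ico (min x y) (max x y) := mem_Ico.2 ⟨le_rfl, by omega⟩
    simp only [bottleneck, min_self, max_self, Ico_self, fold_empty]
    exact ((fold_min_le _).2 (Or.inr ⟨_, hmem, le_rfl⟩)).trans_lt (hw _)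

theorem extend_val_le_sup {n : ℕ} (d : Fin n → ℕ) (k : ℕ) :
    Function.extend Fin.val d 0 k ≤ univ.sup d := by
  by_cases hk : ∃ i : Fin n, (i : ℕ) = k
  · obtain ⟨i, rfl⟩ := hk
    rw [Fin.val_injective.extend_apply]
    exact le_sup (mem_univ i)
  · rw [Function.extend_apply' _ _ _ hk]
    exact Nat.zero_le _

theorem dMin_eq_bottleneck {n C : ℕ} {d : Fin n → ℕ}
    (hw : ∀ k, Function.extend Fin.val d 0 k < C) {i j : Fin (n + 1)} (hij : i < j) :
    dMin n d i j = bottleneck (Function.extend Fin.val d 0) C i j := by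
  have hC k : d k < C := Fin.val_injective.extend_apply d 0 k ▸ hw k
  have hij' : (i : ℕ) < j := hij
  have hjn : (j : ℕ) ≤ n := Nat.lt_succ_iff.1 j.isLt
  rw [dMin, bottleneck, min_eq_left hij'.le, max_eq_right hij'.le]
  have hne : {x | ∃ k : Fin n, (i : ℕ) ≤ k ∧ (k : ℕ) < j ∧ x = d k}.Nonempty :=
    ⟨_, ⟨i, by omega⟩, le_rfl, hij', rfl⟩
  obtain ⟨k, hik, hkj, hk⟩ := Nat.sInf_mem hne
  refine le_antisymm ((le_fold_min _).2 ⟨?_, fun m hm => ?_⟩) ((fold_min_le _).2 ?_)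
  · exact hk ▸ (hC k).le
  · rw [mem_Ico] at hm
    have := Fin.val_injective.extend_apply d 0 (⟨m, by omega⟩ : Fin n)
    exact this ▸ Nat.sInf_le ⟨⟨m, by omega⟩, hm.1, hm.2, rfl⟩
  · exact Or.inr ⟨k, mem_Ico.2 ⟨hik, hkj⟩, by rw [Fin.val_injective.extend_apply, hk]⟩

theorem isSolution_image {n C : ℕ} {d : Fin n → ℕ}
    (hw : ∀ k, Function.extend Fin.val d 0 k < C) {Q : Finset ℕ} {f : ℕ → ℕ → ℕ}
    (hf : IsMinRealization (bottleneck (Function.extend Fin.val d 0) C) (range (n + 1)) Q f) :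
    IsSolution n d (Q.image fun t (i : Fin (n + 1)) => f t i) := by
  have hB := isUltrametricSimilarity_bottleneck hw
  intro i j hij
  have hi : (i : ℕ) ∈ range (n + 1) := mem_range.2 i.isLt
  have hj : (j : ℕ) ∈ range (n + 1) := mem_range.2 j.isLt
  obtain ⟨t, htQ, hne, hmin⟩ := hf.exists_min_eq i hi j hj (Fin.val_injective.ne hij.ne)
  have hg := mem_image_of_mem (fun t (i : Fin (n + 1)) => f t i) htQ
  refine ⟨⟨_, hg, hne⟩, ?_⟩
  rw [dMin_eq_bottleneck hw hij, solMin]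
  refine le_antisymm (Nat.sInf_le ⟨_, hg, hne, hmin.symm⟩)
    (le_csInf ⟨_, _, hg, hne, hmin.symm⟩ ?_)
  rintro _ ⟨g, hg, hgne, rfl⟩
  obtain ⟨t', -, rfl⟩ := mem_image.1 hg
  exact le_min (hf.le_of_ne t' i hi j hj hgne) (hB.symm i j ▸ hf.le_of_ne t' j hj i hi hgne.symm)

theorem stmt_5_general (n : ℕ) (d : Fin n → ℕ) :
    ∃ G : Finset (Fin (n + 1) → ℕ),
      IsSolution n d G ∧ G.card ≤ Nat.clog 2 (n + 1) := by
  have hw k := Nat.lt_succ_of_le (extend_val_le_sup d k)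
  obtain ⟨f, hf⟩ := exists_isMinRealization (isUltrametricSimilarity_bottleneck hw)
    (range (n + 1)) (range (Nat.clog 2 (n + 1)))
    (by simpa using Nat.le_pow_clog one_lt_two (n + 1))
  exact ⟨_, isSolution_image hw hf, card_image_le.trans (card_range _).le⟩

theorem stmt_5 (n : ℕ) (hn : 1 ≤ n) (d : Fin n → ℕ) :
    ∃ G : Finset (Fin (n + 1) → ℕ),
      IsSolution n d G ∧ G.card ≤ Nat.clog 2 (n + 1) :=
  stmt_5_general n d
end

section
/- Let n ≥ 1 and let d ∈ ℕ^n be a constant vector, d_i = c for all i. Then every solution G ⊆ ℕ^(n+1) for d (i.e., every finite set G such that for all i < j, min{ min(g[i], g[j]) : g ∈ G, g[i] ≠ g[j] } = c) satisfies |G| ≥ ⌈log₂(n+1)⌉. -/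
/-!
When all `d i` equal `c`, every pair `i < j` is separated by some `g ∈ G` with
`g i ≠ g j` and `min (g i) (g j) = c`, so exactly one of `g i`, `g j` is `≤ c`.
Hence the threshold pattern `g ↦ (g i ≤ c)` determines the coordinate `i`, giving
`n + 1 ≤ 2 ^ |G|`.
-/

theorem dMin_of_forall_eq {n : ℕ} {d : Fin n → ℕ} {c : ℕ} (hd : ∀ k, d k = c)
    {i j : Fin (n + 1)} (hij : i < j) : dMin n d i j = c := by
  have hi : c ∈ {x : ℕ | ∃ k : Fin n, (i : ℕ) ≤ k ∧ (k : ℕ) < j ∧ x = d k} :=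
    ⟨⟨i, by omega⟩, le_rfl, hij, (hd _).symm⟩
  refine le_antisymm (Nat.sInf_le hi) (le_csInf ⟨c, hi⟩ ?_)
  rintro x ⟨k, -, -, rfl⟩
  exact (hd k).ge

theorem IsSolution.exists_min_eq_dMin {n : ℕ} {d : Fin n → ℕ} {G : Finset (Fin (n + 1) → ℕ)}
    (hG : IsSolution n d G) {i j : Fin (n + 1)} (hij : i < j) :
    ∃ g ∈ G, g i ≠ g j ∧ min (g i) (g j) = dMin n d i j := by
  obtain ⟨⟨g, hg, hne⟩, hmin⟩ := hG i j hij
  obtain ⟨g', hg', hne', hx⟩ :=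
    Nat.sInf_mem (s := {x | ∃ g ∈ G, g i ≠ g j ∧ x = min (g i) (g j)}) ⟨_, g, hg, hne, rfl⟩
  exact ⟨g', hg', hne', hx.symm.trans hmin⟩

theorem le_iff_not_le_of_min_eq {a b c : ℕ} (hab : a ≠ b) (h : min a b = c) :
    a ≤ c ↔ ¬b ≤ c := by
  omega

theorem card_le_two_pow_of_separates {ι : Type*} [Fintype ι] [LinearOrder ι]
    (G : Finset (ι → ℕ)) (c : ℕ)
    (hsep : ∀ i j, i < j → ∃ g ∈ G, (g i ≤ c ↔ ¬g j ≤ c)) :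
    Fintype.card ι ≤ 2 ^ G.card := by
  classical
  have hinj : Function.Injective fun (i : ι) (g : G) => decide ((g : ι → ℕ) i ≤ c) := by
    have hne : ∀ i j, i < j → (fun g : G => decide ((g : ι → ℕ) i ≤ c)) ≠
        fun g : G => decide ((g : ι → ℕ) j ≤ c) := by
      intro i j hij hEq
      obtain ⟨g, hg, hiff⟩ := hsep i j hij
      have := congrFun hEq ⟨g, hg⟩
      simp only [decide_eq_decide] at this
      tauto
    intro i j h
    rcases lt_trichotomy i j with hij | rfl | hji
    · exact absurd h (hne i j hij)
    · rfl
    · exact absurd h.symm (hne j i hji)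
  simpa using Fintype.card_le_of_injective _ hinj

theorem stmt_6_general (n : ℕ) (c : ℕ) (d : Fin n → ℕ) (hd : ∀ i, d i = c)
    (G : Finset (Fin (n + 1) → ℕ)) (hG : IsSolution n d G) :
    Nat.clog 2 (n + 1) ≤ G.card := by
  have hsep : ∀ i j : Fin (n + 1), i < j → ∃ g ∈ G, (g i ≤ c ↔ ¬g j ≤ c) := by
    intro i j hij
    obtain ⟨g, hg, hne, hmin⟩ := hG.exists_min_eq_dMin hij
    exact ⟨g, hg, le_iff_not_le_of_min_eq hne (hmin.trans (dMin_of_forall_eq hd hij))⟩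
  have hcard := card_le_two_pow_of_separates G c hsep
  rw [Fintype.card_fin] at hcard
  exact (Nat.clog_le_iff_le_pow one_lt_two).mpr hcard

theorem stmt_6 (n : ℕ) (hn : 1 ≤ n) (c : ℕ) (d : Fin n → ℕ) (hd : ∀ i, d i = c)
    (G : Finset (Fin (n + 1) → ℕ)) (hG : IsSolution n d G) :
    Nat.clog 2 (n + 1) ≤ G.card :=
  stmt_6_general n c d hd G hG
end

section
/- Let N, m1 ∈ ℕ with 1 ≤ m1 ≤ N, and let x, y, n be natural numbers with y ≥ 1 and x + y ≥ (∑_{k=m1}^N binom(N,k)) + 1. Then x + y - 1 + (x + y)·2^(m1 - 1) ≥ 2^N + 2^(N - m1 + 1) - 1, and in particular if n ≥ x + y - 1 + (x+y)·2^(m1-1) then n + 1 > 2^N. -/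
open Finset

theorem Nat.choose_le_choose_add_add (n k m : ℕ) : n.choose k ≤ (n + m).choose (k + m) := by
  induction m with
  | zero => rfl
  | succ m ih =>
    rw [← Nat.add_assoc, ← Nat.add_assoc, Nat.choose_succ_succ]
    exact ih.trans (Nat.le_add_right _ _)

theorem Nat.sum_Icc_one_choose (d : ℕ) : ∑ j ∈ Icc 1 d, d.choose j = 2 ^ d - 1 := by
  have hIcc : Icc 1 d = (range (d + 1)).erase 0 := by
    ext j
    simp only [mem_Icc, mem_erase, mem_range]
    omega
  rw [hIcc, ← Nat.sum_range_choose d, ← sum_erase_add _ _ (mem_range.2 d.succ_pos),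
    Nat.choose_zero_right, Nat.add_sub_cancel]

/-- Shifting `j ↦ j + m` embeds the nonempty part of row `N - m` of Pascal's triangle
into the part of row `N` beyond column `m`, termwise from below. -/
theorem Nat.two_pow_sub_one_le_sum_Icc_choose (N m : ℕ) :
    2 ^ (N - m) - 1 ≤ ∑ k ∈ Icc (m + 1) N, N.choose k := by
  obtain hN | hmN := le_or_gt N m
  · simp [Nat.sub_eq_zero_of_le hN]
  obtain ⟨d, rfl⟩ := Nat.exists_eq_add_of_le' hmN.le
  rw [Nat.add_sub_cancel, ← Nat.sum_Icc_one_choose]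
  calc ∑ j ∈ Icc 1 d, d.choose j
      ≤ ∑ j ∈ Icc 1 d, (d + m).choose (j + m) :=
        sum_le_sum fun j _ => Nat.choose_le_choose_add_add d j m
    _ = ∑ k ∈ Icc (m + 1) (d + m), (d + m).choose k := by
        rw [add_comm m 1, ← map_add_right_Icc, sum_map]
        rfl

theorem stmt_9_general (N m₁ x y n : ℕ) (h1 : 1 ≤ m₁) (h2 : m₁ ≤ N)
    (hxy : x + y ≥ (∑ k ∈ Finset.Icc m₁ N, N.choose k) + 1) :
    x + y - 1 + (x + y) * 2 ^ (m₁ - 1) ≥ 2 ^ N + 2 ^ (N - m₁ + 1) - 1 ∧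
    (n ≥ x + y - 1 + (x + y) * 2 ^ (m₁ - 1) → n + 1 > 2 ^ N) := by
  have hsum := Nat.two_pow_sub_one_le_sum_Icc_choose N (m₁ - 1)
  rw [Nat.sub_add_cancel h1, show N - (m₁ - 1) = N - m₁ + 1 by omega] at hsum
  have hxy' : 2 ^ (N - m₁ + 1) ≤ x + y := by
    have := Nat.one_le_two_pow (n := N - m₁ + 1)
    omega
  have hpow : 2 ^ N ≤ (x + y) * 2 ^ (m₁ - 1) :=
    calc 2 ^ N = 2 ^ (N - m₁ + 1) * 2 ^ (m₁ - 1) := by rw [← pow_add]; congr 1; omega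
      _ ≤ (x + y) * 2 ^ (m₁ - 1) := Nat.mul_le_mul_right _ hxy'
  exact ⟨by omega, fun hn => by omega⟩

theorem stmt_9 (N m₁ x y n : ℕ) (h1 : 1 ≤ m₁) (h2 : m₁ ≤ N) (hy : 1 ≤ y)
    (hxy : x + y ≥ (∑ k ∈ Finset.Icc m₁ N, N.choose k) + 1) :
    x + y - 1 + (x + y) * 2 ^ (m₁ - 1) ≥ 2 ^ N + 2 ^ (N - m₁ + 1) - 1 ∧
    (n ≥ x + y - 1 + (x + y) * 2 ^ (m₁ - 1) → n + 1 > 2 ^ N) :=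
  stmt_9_general N m₁ x y n h1 h2 hxy
end

section
/- Let p : I → ℕ∞ be a symmetric function on pairs from an index set {1,...,n} (p_{i,j} for i < j), such that for all i < j < k, the three values p_{i,j}, p_{j,k}, p_{i,k} satisfy each is ≥ the min of the other two. If additionally p_{i,j} = min{p_{i,i+1}, ..., p_{j-1,j}} fails for some i < j, there still exists a permutation of {1,...,n} after which the transformed p satisfies p_{i,j} = min{p_{i,i+1}, ..., p_{j-1,j}} for all i < j. (Every 'ultrametric-like' symmetric matrix can be reordered so that off-diagonal entries are determined by the superdiagonal via minima.) -/
/-- Among `a`, `b`, `c` the minimum is attained at least twice. -/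
def MinTwice {α : Type*} [LinearOrder α] (a b c : α) : Prop :=
  (a = b ∧ a ≤ c) ∨ (a = c ∧ a ≤ b) ∨ (b = c ∧ b ≤ a)

/-!
Call an ordering of the points Robinson if `p a c ≤ p a b` and `p a c ≤ p b c` whenever `b` lies
between `a` and `c`. For a Robinson ordering, `p i j` is at most every step value between `i` and
`j`, and the ultrametric inequality `min (p i j) (p j k) ≤ p i k` gives the converse, so `p i j` is
the minimum of the steps.

A Robinson ordering is built by inserting the points one at a time: a new point `x` goes right
after the last point `t` maximising `p · x`. The ultrametric condition forces
`p y x = min (p y t) (p t x)` for every earlier point `y`, which transports the Robinson inequalities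
for `t` to `x`.
-/

namespace MinTwice

variable {β : Type*} [LinearOrder β] {a b c : β}

theorem min_le (h : MinTwice a b c) : min a b ≤ c := by
  rcases h with ⟨rfl, h⟩ | ⟨rfl, -⟩ | ⟨rfl, -⟩
  · exact min_le_of_left_le h
  · exact min_le_left _ _
  · exact min_le_right _ _

theorem eq_min_of_le (h : MinTwice a b c) (hcb : c ≤ b) : c = min a b := by
  rcases h with ⟨rfl, h⟩ | ⟨rfl, h⟩ | ⟨rfl, h⟩
  · rw [le_antisymm hcb h, min_self]
  · exact (min_eq_left h).symm
  · exact (min_eq_right h).symm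

end MinTwice

section Robinson

variable {α β γ : Type*} [LinearOrder β] {p : α → α → β}

def IsRobinsonOn [Preorder γ] (p : α → α → β) (r : α → γ) (s : Set α) : Prop :=
  ∀ ⦃a⦄, a ∈ s → ∀ ⦃b⦄, b ∈ s → ∀ ⦃c⦄, c ∈ s → r a < r b → r b < r c →
    p a c ≤ p a b ∧ p a c ≤ p b c

theorem le_left_iff_le_right (hsymm : ∀ a b, p a b = p b a)
    (hult : ∀ a b c, MinTwice (p a b) (p b c) (p a c)) (a b c : α) :
    p a c ≤ p a b ↔ p a c ≤ p b c := by
  constructor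
  · intro h
    calc p a c = min (p b a) (p a c) := by rw [hsymm b a, min_eq_right h]
      _ ≤ p b c := (hult b a c).min_le
  · intro h
    calc p a c = min (p a c) (p c b) := by rw [hsymm c b, min_eq_left h]
      _ ≤ p a b := (hult a c b).min_le

theorem exists_insertion_point (hsymm : ∀ a b, p a b = p b a)
    (hult : ∀ a b c, MinTwice (p a b) (p b c) (p a c)) {s : Finset α} (r : α → ℕ)
    (hs : s.Nonempty) (x : α) :
    ∃ t ∈ s, (∀ y ∈ s, p y x = min (p y t) (p t x)) ∧ ∀ y ∈ s, r t < r y → p t y < p t x := by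
  obtain ⟨t, ht, htmax⟩ := s.exists_max_image (fun y => toLex (p y x, r y)) hs
  have hfactor : ∀ y ∈ s, p y x = min (p y t) (p t x) := fun y hy =>
    (hult y t x).eq_min_of_le (Prod.Lex.monotone_fst _ _ (htmax y hy) :)
  refine ⟨t, ht, hfactor, fun y hy hty => ?_⟩
  have hlt : p y x < p t x := by
    rcases Prod.Lex.toLex_le_toLex.1 (htmax y hy) with h | ⟨-, h⟩
    · exact h
    · exact absurd h hty.not_ge
  rw [hfactor y hy, min_lt_iff] at hlt
  rw [hsymm]
  exact hlt.resolve_right (lt_irrefl _)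

/-- Doubling the old positions leaves the odd slot `2 * r t + 1`, right after `t`, free for `x`. -/
def insertAfter [DecidableEq α] (r : α → ℕ) (x t : α) (y : α) : ℕ :=
  if y = x then 2 * r t + 1 else 2 * r y

theorem insertAfter_self [DecidableEq α] (r : α → ℕ) (x t : α) :
    insertAfter r x t x = 2 * r t + 1 :=
  if_pos rfl

theorem insertAfter_of_mem [DecidableEq α] {s : Finset α} (r : α → ℕ) {x : α} (hx : x ∉ s)
    (t : α) {y : α} (hy : y ∈ s) : insertAfter r x t y = 2 * r y :=
  if_neg (ne_of_mem_of_not_mem hy hx)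

theorem injOn_insertAfter [DecidableEq α] {s : Finset α} {r : α → ℕ} (hinj : Set.InjOn r s)
    {x : α} (hx : x ∉ s) (t : α) : Set.InjOn (insertAfter r x t) ↑(insert x s) := by
  have hr'x := insertAfter_self r x t
  have hr's := fun y (hy : y ∈ s) => insertAfter_of_mem r hx t hy
  intro a ha b hb hab
  simp only [Finset.coe_insert, Set.mem_insert_iff, Finset.mem_coe] at ha hb
  rcases ha with rfl | ha <;> rcases hb with rfl | hb
  · rfl
  · rw [hr'x, hr's b hb] at hab; omega
  · rw [hr'x, hr's a ha] at hab; omega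
  · rw [hr's a ha, hr's b hb] at hab; exact hinj ha hb (by omega)

theorem IsRobinsonOn.exists_insert [DecidableEq α] (hsymm : ∀ a b, p a b = p b a)
    (hult : ∀ a b c, MinTwice (p a b) (p b c) (p a c)) {s : Finset α} {r : α → ℕ}
    (hinj : Set.InjOn r s) (hrob : IsRobinsonOn p r s) {x : α} (hx : x ∉ s)
    (hs : s.Nonempty) :
    ∃ r' : α → ℕ, Set.InjOn r' ↑(insert x s) ∧ IsRobinsonOn p r' ↑(insert x s) := by
  obtain ⟨t, ht, hfactor, hlast⟩ := exists_insertion_point hsymm hult r hs x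
  have hr'x := insertAfter_self r x t
  have hr's := fun y (hy : y ∈ s) => insertAfter_of_mem r hx t hy
  refine ⟨insertAfter r x t, injOn_insertAfter hinj hx t, ?_⟩
  intro a ha b hb c hc hab hbc
  simp only [Finset.coe_insert, Set.mem_insert_iff, Finset.mem_coe] at ha hb hc
  rcases ha with rfl | ha <;> rcases hb with rfl | hb <;> rcases hc with rfl | hc
  · omega
  · omega
  · omega
  · -- `x` first: `t` precedes `b` and `c`
    rw [hr'x, hr's b hb] at hab
    rw [hr's b hb, hr's c hc] at hbc
    have h : p a c ≤ p a b := by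
      rw [hsymm a c, hsymm a b, hfactor c hc, hfactor b hb, hsymm c t, hsymm b t]
      exact min_le_min_right _ (hrob ht hb hc (by omega) (by omega)).1
    exact ⟨h, (le_left_iff_le_right hsymm hult a b c).1 h⟩
  · omega
  · -- `x` in the middle: `a` is at or before `t`, and `c` after it
    rw [hr's a ha, hr'x] at hab
    rw [hr'x, hr's c hc] at hbc
    have htc := hlast c hc (by omega)
    have hatc : p a c ≤ p t c := by
      rcases (show r a ≤ r t by omega).lt_or_eq with h | h
      · exact (hrob ha ht hc h (by omega)).2
      · rw [hinj ha ht h]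
    have h : p a c ≤ p b c := by
      rw [hsymm b c, hfactor c hc, hsymm c t, min_eq_left htc.le]
      exact hatc
    exact ⟨(le_left_iff_le_right hsymm hult a b c).2 h, h⟩
  · -- `x` last: `a` and `b` are at or before `t`
    rw [hr's a ha, hr's b hb] at hab
    rw [hr's b hb, hr'x] at hbc
    have h : p a c ≤ p b c := by
      rcases (show r b ≤ r t by omega).lt_or_eq with h | h
      · rw [hfactor a ha, hfactor b hb]
        exact min_le_min_right _ (hrob ha hb ht (by omega) h).2
      · rw [hinj hb ht h, hfactor a ha]
        exact min_le_right _ _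
    exact ⟨(le_left_iff_le_right hsymm hult a b c).2 h, h⟩
  · rw [hr's a ha, hr's b hb] at hab
    rw [hr's b hb, hr's c hc] at hbc
    exact hrob ha hb hc (by omega) (by omega)

theorem exists_injOn_isRobinsonOn [DecidableEq α] (hsymm : ∀ a b, p a b = p b a)
    (hult : ∀ a b c, MinTwice (p a b) (p b c) (p a c)) (s : Finset α) :
    ∃ r : α → ℕ, Set.InjOn r s ∧ IsRobinsonOn p r s := by
  induction s using Finset.induction_on with
  | empty => exact ⟨fun _ => 0, by simp, fun _ _ _ _ _ _ h _ => (lt_irrefl 0 h).elim⟩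
  | insert x s hx ih =>
    rcases s.eq_empty_or_nonempty with rfl | hs
    · exact ⟨fun _ => 0, by simp, fun _ _ _ _ _ _ h _ => (lt_irrefl 0 h).elim⟩
    · obtain ⟨r, hinj, hrob⟩ := ih
      exact hrob.exists_insert hsymm hult hinj hx hs

theorem IsRobinsonOn.comp_of_strictMono [Preorder γ] {δ : Type*} [Preorder δ] {r : α → γ}
    (hrob : IsRobinsonOn p r Set.univ) {σ : δ → α} (hσ : StrictMono (r ∘ σ)) :
    IsRobinsonOn (fun i j => p (σ i) (σ j)) id Set.univ :=
  fun _ _ _ _ _ _ hab hbc => hrob trivial trivial trivial (hσ hab) (hσ hbc)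

theorem IsRobinsonOn.le_of_le_of_le [PartialOrder γ] {q : γ → γ → β}
    (hrob : IsRobinsonOn q id Set.univ) {i i' j' j : γ} (hi : i ≤ i') (hij : i' < j')
    (hj : j' ≤ j) : q i j ≤ q i' j' :=
  calc q i j ≤ q i' j := by
        rcases hi.lt_or_eq with hi | rfl
        · exact (hrob trivial trivial trivial hi (hij.trans_le hj)).2
        · exact le_rfl
    _ ≤ q i' j' := by
        rcases hj.lt_or_eq with hj | rfl
        · exact (hrob trivial trivial trivial hij hj).1
        · exact le_rfl

end Robinson

section Steps

variable {β : Type*} {n : ℕ}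

theorem exists_step_le [LinearOrder β] {q : Fin n → Fin n → β}
    (hult : ∀ i j k, MinTwice (q i j) (q j k) (q i k)) {i j : Fin n} (hij : i < j) :
    ∃ l : ℕ, (i : ℕ) ≤ l ∧ l < j ∧
      ∃ (h1 : l < n) (h2 : l + 1 < n), q ⟨l, h1⟩ ⟨l + 1, h2⟩ ≤ q i j := by
  obtain ⟨j, hj⟩ := j
  induction j with
  | zero => exact absurd (Fin.lt_def.1 hij) (Nat.not_lt_zero _)
  | succ m ih =>
    have him : (i : ℕ) ≤ m := Nat.lt_succ_iff.1 hij
    rcases him.lt_or_eq with him | him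
    · obtain ⟨l, hil, hlm, h1, h2, hl⟩ := ih (by omega) him
      have hmin := (hult i ⟨m, by omega⟩ ⟨m + 1, hj⟩).min_le
      rcases min_choice (q i ⟨m, by omega⟩) (q ⟨m, by omega⟩ ⟨m + 1, hj⟩) with h | h
      · exact ⟨l, hil, Nat.lt_succ_of_lt hlm, h1, h2, hl.trans (h ▸ hmin)⟩
      · exact ⟨m, him.le, Nat.lt_succ_self m, by omega, hj, h ▸ hmin⟩
    · subst him
      exact ⟨i, le_rfl, Nat.lt_succ_self _, by omega, hj, le_rfl⟩

theorem IsRobinsonOn.eq_sInf_steps [CompleteLinearOrder β] {q : Fin n → Fin n → β}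
    (hrob : IsRobinsonOn q id Set.univ) (hult : ∀ i j k, MinTwice (q i j) (q j k) (q i k))
    {i j : Fin n} (hij : i < j) :
    q i j = sInf {x : β | ∃ l : ℕ, (i : ℕ) ≤ l ∧ l < (j : ℕ) ∧
      ∃ (h1 : l < n) (h2 : l + 1 < n), x = q ⟨l, h1⟩ ⟨l + 1, h2⟩} := by
  refine le_antisymm (le_sInf ?_) ?_
  · rintro _ ⟨l, hil, hlj, h1, h2, rfl⟩
    exact hrob.le_of_le_of_le (show i ≤ ⟨l, h1⟩ from hil) (Fin.lt_def.2 (Nat.lt_succ_self l))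
      (show (⟨l + 1, h2⟩ : Fin n) ≤ j from hlj)
  · obtain ⟨l, hil, hlj, h1, h2, hl⟩ := exists_step_le hult hij
    exact sInf_le_of_le ⟨l, hil, hlj, h1, h2, rfl⟩ hl

end Steps

theorem stmt_14 (n : ℕ) (p : Fin n → Fin n → ℕ∞)
    (hsymm : ∀ i j, p i j = p j i)
    (hult : ∀ i j k : Fin n, MinTwice (p i j) (p j k) (p i k)) :
    ∃ σ : Equiv.Perm (Fin n), ∀ i j : Fin n, i < j →
      p (σ i) (σ j) =
        sInf {x : ℕ∞ | ∃ l : ℕ, (i : ℕ) ≤ l ∧ l < (j : ℕ) ∧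
          ∃ (h1 : l < n) (h2 : l + 1 < n), x = p (σ ⟨l, h1⟩) (σ ⟨l + 1, h2⟩)} := by
  obtain ⟨r, hinj, hrob⟩ := exists_injOn_isRobinsonOn hsymm hult Finset.univ
  rw [Finset.coe_univ, Set.injOn_univ] at hinj
  rw [Finset.coe_univ] at hrob
  let σ := Tuple.sort r
  have hσ : StrictMono (r ∘ σ) :=
    (Tuple.monotone_sort r).strictMono_of_injective (hinj.comp σ.injective)
  exact ⟨σ, fun i j hij => (hrob.comp_of_strictMono hσ).eq_sInf_steps
    (fun i j k => hult (σ i) (σ j) (σ k)) hij⟩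
end

section
/- Let G₁ be a solution for a vector d ∈ ℕ^n and suppose every coordinate of every vector in an auxiliary finite set G₀ ⊆ ℕ^(n+1), whenever two coordinates i < j differ, satisfies min(g[i], g[j]) ≥ min(d_i, ..., d_{j-1}). Then G₀ ∪ G₁ is also a solution for d. -/
theorem csInf_union_of_csInf_le {α : Type*} [ConditionallyCompleteLattice α] {s t : Set α}
    (ht : t.Nonempty) (ht_bdd : BddBelow t) (hs : ∀ x ∈ s, sInf t ≤ x) :
    sInf (s ∪ t) = sInf t := by
  refine IsGLB.csInf_eq ⟨?_, fun b hb => ?_⟩ (ht.mono Set.subset_union_right)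
  · rintro x (hx | hx)
    exacts [hs x hx, csInf_le ht_bdd hx]
  · exact le_csInf ht fun x hx => hb (Set.mem_union_right s hx)

theorem solMin_union_of_solMin_le {n : ℕ} {G₀ G₁ : Finset (Fin (n + 1) → ℕ)}
    {i j : Fin (n + 1)}
    (hG₁ : ∃ g ∈ G₁, g i ≠ g j)
    (hG₀ : ∀ g ∈ G₀, g i ≠ g j → solMin n G₁ i j ≤ min (g i) (g j)) :
    solMin n (G₀ ∪ G₁) i j = solMin n G₁ i j := by
  have hset : {x : ℕ | ∃ g ∈ G₀ ∪ G₁, g i ≠ g j ∧ x = min (g i) (g j)} =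
      {x | ∃ g ∈ G₀, g i ≠ g j ∧ x = min (g i) (g j)} ∪
        {x | ∃ g ∈ G₁, g i ≠ g j ∧ x = min (g i) (g j)} := by
    ext x
    simp only [Finset.mem_union, Set.mem_ofPred_eq, Set.mem_union]
    grind
  obtain ⟨g, hg, hne⟩ := hG₁
  rw [solMin, hset]
  refine csInf_union_of_csInf_le ⟨_, g, hg, hne, rfl⟩ (OrderBot.bddBelow _) ?_
  rintro x ⟨g, hg, hne, rfl⟩
  exact hG₀ g hg hne

theorem stmt_17 (n : ℕ) (d : Fin n → ℕ) (G₀ G₁ : Finset (Fin (n + 1) → ℕ))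
    (h₁ : IsSolution n d G₁)
    (h₀ : ∀ g ∈ G₀, ∀ i j : Fin (n + 1), i < j → g i ≠ g j →
      dMin n d i j ≤ min (g i) (g j)) :
    IsSolution n d (G₀ ∪ G₁) := by
  intro i j hij
  obtain ⟨⟨g, hg, hne⟩, hmin⟩ := h₁ i j hij
  refine ⟨⟨g, Finset.mem_union_right _ hg, hne⟩, ?_⟩
  rw [solMin_union_of_solMin_le ⟨g, hg, hne⟩
    fun g' hg' hne' => hmin ▸ h₀ g' hg' i j hij hne', hmin]
end

section
/- For all n ≥ 1, ⌈log₂(n+1)⌉ is the smallest t such that every vector d ∈ ℕ^n admits a solution of cardinality at most t. That is: (1) every d ∈ ℕ^n has a solution with at most ⌈log₂(n+1)⌉ vectors, and (2) there exists d ∈ ℕ^n (e.g., any constant vector) admitting no solution with fewer than ⌈log₂(n+1)⌉ vectors. -/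
/-! The path similarity `m i j = min d[i, j)` satisfies the ultrametric inequality
`min (m i j) (m j k) ≤ m i k`. Let `v` be its least value on a point set `P`; the relation
`m > v` splits `P` into classes. Give the classes pairwise distinct sets of coordinates, class `C`
getting at least `log₂ |C|` of them: as the class sizes add up to `|P| ≤ 2 ^ t`, a Kraft-type
allocation does this. Inside each class recurse on its own coordinates, and put `v` on all other
coordinates. Two points of different classes then differ, with minimum `v`, at any coordinate
owned by exactly one of the two classes.

For `d = 0` every pair of points is told apart by a vector vanishing at exactly one of them, so
the zero sets `{g ∈ G | g i = 0}` of the `n + 1` points are distinct subsets of `G`. -/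

open Finset

section Allocation

variable {ι σ : Type*}

theorem exists_maximal_subset_sum_le [DecidableEq ι] (K : Finset ι) (w : ι → ℕ)
    (hw : ∀ k ∈ K, 0 < w k) (H : ℕ) :
    ∃ A ⊆ K, ∑ k ∈ A, w k ≤ H ∧ ∀ k ∈ K \ A, H < ∑ k ∈ A, w k + w k := by
  obtain ⟨A, hA, hmax⟩ := ({A ∈ K.powerset | ∑ k ∈ A, w k ≤ H}).exists_max_image
    (fun A => ∑ k ∈ A, w k) ⟨∅, by simp⟩
  rw [mem_filter, mem_powerset] at hA
  refine ⟨A, hA.1, hA.2, fun k hk => ?_⟩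
  rw [mem_sdiff] at hk
  by_contra! hle
  have hins := hmax (insert k A) (by
    rw [mem_filter, mem_powerset, sum_insert hk.2]
    exact ⟨insert_subset hk.1 hA.1, by omega⟩)
  rw [sum_insert hk.2] at hins
  have := hw k hk.1
  omega

theorem sum_half_le_of_forall_lt (B : Finset ι) (w : ι → ℕ) {a H : ℕ} (ha : a ≤ H)
    (hsum : a + ∑ k ∈ B, w k ≤ 2 * H) (hB : ∀ k ∈ B, H < a + w k) :
    ∑ k ∈ B, (w k + 1) / 2 ≤ H := by
  rcases le_or_gt B.card 1 with hB1 | hB2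
  · rcases B.eq_empty_or_nonempty with rfl | ⟨k, hk⟩
    · simp
    obtain rfl : B = {k} :=
      eq_singleton_iff_unique_mem.2 ⟨hk, fun j hj => card_le_one.1 hB1 j hj k hk⟩
    rw [sum_singleton] at hsum ⊢
    omega
  · obtain ⟨r, rfl⟩ : ∃ r, H = a + r := ⟨H - a, by omega⟩
    have hlow : B.card * (r + 1) ≤ ∑ k ∈ B, w k := by
      rw [← smul_eq_mul, ← sum_const]
      exact sum_le_sum fun k hk => by have := hB k hk; omega
    have hhalf : 2 * ∑ k ∈ B, (w k + 1) / 2 ≤ ∑ k ∈ B, w k + B.card := by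
      rw [mul_sum, card_eq_sum_ones, ← sum_add_distrib]
      exact sum_le_sum fun k _ => by omega
    nlinarith

theorem exists_injOn_subset_of_sum_le_two_pow [DecidableEq ι] [DecidableEq σ] (S : Finset σ)
    (K : Finset ι) (w : ι → ℕ) (hw : ∀ k ∈ K, 0 < w k) (hsum : ∑ k ∈ K, w k ≤ 2 ^ S.card) :
    ∃ O : ι → Finset σ, Set.InjOn O K ∧ ∀ k ∈ K, O k ⊆ S ∧ w k ≤ 2 ^ (O k).card := by
  induction S using Finset.induction_on generalizing K w with
  | empty =>
    have hK : K.card ≤ 1 := by simpa using (card_nsmul_le_sum K w 1 hw).trans hsum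
    refine ⟨fun _ => ∅, fun k hk l hl _ => card_le_one.1 hK k hk l hl, fun k hk => ⟨subset_rfl, ?_⟩⟩
    simpa using (single_le_sum (fun _ _ => Nat.zero_le _) hk).trans hsum
  | insert s S hs IH =>
    -- A maximal `A` of weight `≤ 2 ^ |S|` recurses on `S`; every other item owns `s` and
    -- recurses on `S` with its weight halved, which the maximality of `A` makes affordable.
    rw [card_insert_of_notMem hs, pow_succ, mul_comm] at hsum
    obtain ⟨A, hAK, hA, hmax⟩ := exists_maximal_subset_sum_le K w hw (2 ^ S.card)
    obtain ⟨OA, hOAinj, hOA⟩ := IH A w (fun k hk => hw k (hAK hk)) hA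
    obtain ⟨OB, hOBinj, hOB⟩ := IH (K \ A) (fun k => (w k + 1) / 2)
      (fun k hk => by have := hw k (mem_sdiff.1 hk).1; omega)
      (sum_half_le_of_forall_lt _ _ hA (by rwa [add_comm, sum_sdiff hAK]) hmax)
    have hsOA : ∀ k ∈ A, s ∉ OA k := fun k hk h => hs ((hOA k hk).1 h)
    have hsOB : ∀ k ∈ K \ A, s ∉ OB k := fun k hk h => hs ((hOB k hk).1 h)
    refine ⟨fun k => if k ∈ A then OA k else insert s (OB k), ?_, fun k hk => ?_⟩
    · intro k hk l hl hkl
      simp only at hkl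
      split_ifs at hkl with hkA hlA hlA
      · exact hOAinj hkA hlA hkl
      · exact (hsOA k hkA (hkl ▸ mem_insert_self s _)).elim
      · exact (hsOA l hlA (hkl ▸ mem_insert_self s _)).elim
      · have hkB : k ∈ K \ A := mem_sdiff.2 ⟨hk, hkA⟩
        have hlB : l ∈ K \ A := mem_sdiff.2 ⟨hl, hlA⟩
        refine hOBinj hkB hlB ?_
        simpa [erase_insert (hsOB k hkB), erase_insert (hsOB l hlB)] using
          congrArg (·.erase s) hkl
    · simp only
      split_ifs with hkA
      · exact ⟨(hOA k hkA).1.trans (subset_insert s S), (hOA k hkA).2⟩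
      · have hkB : k ∈ K \ A := mem_sdiff.2 ⟨hk, hkA⟩
        rw [card_insert_of_notMem (hsOB k hkB), pow_succ]
        have := (hOB k hkB).2
        exact ⟨insert_subset_insert s (hOB k hkB).1, by omega⟩

end Allocation

section Ultrametric

variable {α σ : Type*}

/-- A similarity (large means close) satisfying the ultrametric inequality; nothing is asked of
`m i i`. -/
structure IsUltrametricSim (m : α → α → ℕ) : Prop where
  symm : ∀ i j, m i j = m j i
  min_le : ∀ i j k, i ≠ k → min (m i j) (m j k) ≤ m i k

/-- The abstract form of `IsSolution`: on `P`, `m i j` is the least `min (x s i) (x s j)` over the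
coordinates `s` with `x s i ≠ x s j`, and it is attained at a coordinate in `S`. -/
structure IsMinRep (m : α → α → ℕ) (P : Finset α) (S : Finset σ) (x : σ → α → ℕ) : Prop where
  le_min : ∀ s, ∀ i ∈ P, ∀ j ∈ P, x s i ≠ x s j → m i j ≤ min (x s i) (x s j)
  exists_eq : ∀ i ∈ P, ∀ j ∈ P, i ≠ j → ∃ s ∈ S, x s i ≠ x s j ∧ min (x s i) (x s j) = m i j

def simClass [DecidableEq α] (m : α → α → ℕ) (P : Finset α) (v : ℕ) (p : α) : Finset α :=
  {q ∈ P | p = q ∨ v < m p q}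

variable {m : α → α → ℕ} {P : Finset α} {v : ℕ} {p q r i j : α}

lemma mem_simClass [DecidableEq α] : q ∈ simClass m P v p ↔ q ∈ P ∧ (p = q ∨ v < m p q) := by
  simp [simClass]

lemma self_mem_simClass [DecidableEq α] (hp : p ∈ P) : p ∈ simClass m P v p :=
  mem_simClass.2 ⟨hp, Or.inl rfl⟩

namespace IsUltrametricSim

variable (hm : IsUltrametricSim m)
include hm

lemma joined_symm (h : p = q ∨ v < m p q) : q = p ∨ v < m q p := by
  rcases h with rfl | h
  · exact Or.inl rfl
  · exact Or.inr (hm.symm p q ▸ h)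

lemma joined_trans (hpq : p = q ∨ v < m p q) (hqr : q = r ∨ v < m q r) :
    p = r ∨ v < m p r := by
  rcases hpq with rfl | hpq
  · exact hqr
  rcases hqr with rfl | hqr
  · exact Or.inr hpq
  by_cases hpr : p = r
  · exact Or.inl hpr
  · exact Or.inr ((lt_min hpq hqr).trans_le (hm.min_le p q r hpr))

variable [DecidableEq α]

lemma lt_of_mem_simClass (hi : i ∈ simClass m P v p) (hj : j ∈ simClass m P v p)
    (hij : i ≠ j) : v < m i j :=
  (hm.joined_trans (hm.joined_symm (mem_simClass.1 hi).2) (mem_simClass.1 hj).2).resolve_left hij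

lemma simClass_eq (h : p = q ∨ v < m p q) : simClass m P v q = simClass m P v p := by
  ext r
  simp only [mem_simClass]
  exact and_congr_right fun _ => ⟨hm.joined_trans h, hm.joined_trans (hm.joined_symm h)⟩

lemma simClass_eq_iff (hq : q ∈ P) :
    simClass m P v q = simClass m P v p ↔ q ∈ simClass m P v p :=
  ⟨fun h => h ▸ self_mem_simClass hq, fun h => hm.simClass_eq (mem_simClass.1 h).2⟩

lemma sum_card_simClass : ∑ C ∈ P.image (simClass m P v), C.card = P.card := by
  rw [card_eq_sum_card_image (simClass m P v) P]
  refine sum_congr rfl fun C hC => ?_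
  obtain ⟨p, -, rfl⟩ := mem_image.1 hC
  congr 1
  ext q
  rw [mem_filter]
  exact ⟨fun h => ⟨(mem_simClass.1 h).1, (hm.simClass_eq_iff (mem_simClass.1 h).1).2 h⟩,
    fun h => (hm.simClass_eq_iff h.1).1 h.2⟩

lemma simClass_ssubset {a b : α} (ha : a ∈ P) (hb : b ∈ P) (hab : a ≠ b) (hv : m a b ≤ v) :
    simClass m P v p ⊂ P := by
  refine filter_ssubset.2 ?_
  by_contra! h
  exact (hm.lt_of_mem_simClass (mem_simClass.2 ⟨ha, h a ha⟩) (mem_simClass.2 ⟨hb, h b hb⟩)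
    hab).not_ge hv

lemma eq_of_simClass_ne (hv : ∀ i ∈ P, ∀ j ∈ P, i ≠ j → v ≤ m i j) (hi : i ∈ P) (hj : j ∈ P)
    (h : simClass m P v i ≠ simClass m P v j) : m i j = v := by
  refine le_antisymm (not_lt.1 fun hlt => h (hm.simClass_eq (Or.inr hlt)).symm) (hv i hi j hj ?_)
  rintro rfl
  exact h rfl

lemma isMinRep_of_simClass [DecidableEq σ] (hv : ∀ i ∈ P, ∀ j ∈ P, i ≠ j → v ≤ m i j)
    {S : Finset σ} {O : Finset α → Finset σ} (hO : Set.InjOn O (P.image (simClass m P v)))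
    (hOS : ∀ p ∈ P, O (simClass m P v p) ⊆ S) {Y : Finset α → σ → α → ℕ}
    (hYv : ∀ s, ∀ p ∈ P, v < Y (simClass m P v p) s p)
    (hY : ∀ p ∈ P,
      IsMinRep m (simClass m P v p) (O (simClass m P v p)) (Y (simClass m P v p))) :
    IsMinRep m P S fun s p =>
      if s ∈ O (simClass m P v p) then Y (simClass m P v p) s p else v := by
  set C := simClass m P v
  have hge : ∀ s, ∀ p ∈ P, v ≤ if s ∈ O (C p) then Y (C p) s p else v := fun s p hp => by
    split_ifs
    exacts [(hYv s p hp).le, le_rfl]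
  constructor
  · intro s i hi j hj hne
    by_cases hC : C i = C j
    · have hjC : j ∈ C i := hC ▸ self_mem_simClass hj
      simp only [← hC] at hne ⊢
      split_ifs at hne ⊢
      · exact (hY i hi).le_min s i (self_mem_simClass hi) j hjC hne
      · exact (hne rfl).elim
    · rw [hm.eq_of_simClass_ne hv hi hj hC]
      exact le_min (hge s i hi) (hge s j hj)
  · intro i hi j hj hij
    by_cases hC : C i = C j
    · have hjC : j ∈ C i := hC ▸ self_mem_simClass hj
      obtain ⟨s, hs, hne, heq⟩ := (hY i hi).exists_eq i (self_mem_simClass hi) j hjC hij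
      refine ⟨s, hOS i hi hs, ?_⟩
      simp only [← hC, hs, if_true]
      exact ⟨hne, heq⟩
    · have hOne : O (C i) ≠ O (C j) := fun h =>
        hC (hO (mem_image_of_mem _ hi) (mem_image_of_mem _ hj) h)
      obtain ⟨s, hs⟩ := symmDiff_nonempty.2 hOne
      rw [hm.eq_of_simClass_ne hv hi hj hC]
      rcases mem_symmDiff.1 hs with ⟨hsi, hsj⟩ | ⟨hsj, hsi⟩
      · have := hYv s i hi
        refine ⟨s, hOS i hi hsi, ?_⟩
        simp only [hsi, hsj, if_true, if_false]
        omega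
      · have := hYv s j hj
        refine ⟨s, hOS j hj hsj, ?_⟩
        simp only [hsi, hsj, if_true, if_false]
        omega

theorem exists_isMinRep [DecidableEq σ] (P : Finset α) (S : Finset σ) (w : ℕ)
    (hP : P.card ≤ 2 ^ S.card) (hw : ∀ i ∈ P, ∀ j ∈ P, i ≠ j → w ≤ m i j) :
    ∃ x : σ → α → ℕ, (∀ s, ∀ p ∈ P, w ≤ x s p) ∧ IsMinRep m P S x := by
  induction P using Finset.strongInduction generalizing S w with
  | H P IH =>
  rcases le_or_gt P.card 1 with hP1 | hP1
  · exact ⟨fun _ _ => w, fun _ _ _ => le_rfl, fun _ _ _ _ _ h => (h rfl).elim,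
      fun i hi j hj hij => (hij (card_le_one.1 hP1 i hi j hj)).elim⟩
  obtain ⟨a₀, ha₀, b₀, hb₀, hab₀⟩ := one_lt_card.1 hP1
  obtain ⟨⟨a, b⟩, habP, hmin⟩ := P.offDiag.exists_min_image (fun q => m q.1 q.2)
    ⟨(a₀, b₀), mem_offDiag.2 ⟨ha₀, hb₀, hab₀⟩⟩
  obtain ⟨ha, hb, hab⟩ := mem_offDiag.1 habP
  set v := m a b
  have hv : ∀ i ∈ P, ∀ j ∈ P, i ≠ j → v ≤ m i j := fun i hi j hj hij =>
    hmin (i, j) (mem_offDiag.2 ⟨hi, hj, hij⟩)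
  obtain ⟨O, hOinj, hO⟩ := exists_injOn_subset_of_sum_le_two_pow S (P.image (simClass m P v))
    card (fun C hC => by
      obtain ⟨p, hp, rfl⟩ := mem_image.1 hC
      exact card_pos.2 ⟨p, self_mem_simClass hp⟩)
    (hm.sum_card_simClass.trans_le hP)
  have hY : ∀ C ∈ P.image (simClass m P v),
      ∃ y : σ → α → ℕ, (∀ s, ∀ p ∈ C, v + 1 ≤ y s p) ∧ IsMinRep m C (O C) y := by
    intro C hC
    obtain ⟨p, -, rfl⟩ := mem_image.1 hC
    exact IH _ (hm.simClass_ssubset ha hb hab le_rfl) _ _ (hO _ hC).2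
      fun i hi j hj hij => hm.lt_of_mem_simClass hi hj hij
  choose! Y hYv hY using hY
  refine ⟨_, fun s p hp => ?_, hm.isMinRep_of_simClass hv hOinj
    (fun p hp => (hO _ (mem_image_of_mem _ hp)).1)
    (fun s p hp => hYv _ (mem_image_of_mem _ hp) s p (self_mem_simClass hp))
    (fun p hp => hY _ (mem_image_of_mem _ hp))⟩
  have hwv : w ≤ v := hw a ha b hb hab
  split_ifs
  · have := hYv _ (mem_image_of_mem _ hp) s p (self_mem_simClass hp)
    omega
  · exact hwv

end IsUltrametricSim

end Ultrametric

section PathMin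

variable {n : ℕ} (d : Fin n → ℕ)

lemma dMin_le {i j : Fin (n + 1)} (k : Fin n) (hik : (i : ℕ) ≤ k) (hkj : (k : ℕ) < j) :
    dMin n d i j ≤ d k :=
  Nat.sInf_le ⟨k, hik, hkj, rfl⟩

lemma exists_dMin_eq {i j : Fin (n + 1)} (hij : i < j) :
    ∃ k : Fin n, (i : ℕ) ≤ k ∧ (k : ℕ) < j ∧ dMin n d i j = d k :=
  Nat.sInf_mem (s := {x | ∃ k : Fin n, (i : ℕ) ≤ k ∧ (k : ℕ) < j ∧ x = d k})
    ⟨_, ⟨i, by omega⟩, le_rfl, hij, rfl⟩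

noncomputable def pathMin (i j : Fin (n + 1)) : ℕ :=
  dMin n d (min i j) (max i j)

lemma pathMin_of_lt {i j : Fin (n + 1)} (hij : i < j) : pathMin d i j = dMin n d i j := by
  rw [pathMin, min_eq_left hij.le, max_eq_right hij.le]

lemma isUltrametricSim_pathMin : IsUltrametricSim (pathMin d) where
  symm i j := by rw [pathMin, pathMin, min_comm, max_comm]
  min_le i j k hik := by
    obtain ⟨c, hc₁, hc₂, hc⟩ := exists_dMin_eq d (min_lt_max.2 hik)
    rw [pathMin, pathMin, pathMin, hc]
    simp only [Fin.coe_min, Fin.coe_max] at hc₁ hc₂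
    by_cases hcij : min (i : ℕ) j ≤ c ∧ (c : ℕ) < max (i : ℕ) j
    · exact min_le_of_left_le (dMin_le d c (by simpa using hcij.1) (by simpa using hcij.2))
    · exact min_le_of_right_le (dMin_le d c (by simp; omega) (by simp; omega))

end PathMin

lemma isSolution_iff_isLeast {n : ℕ} {d : Fin n → ℕ} {G : Finset (Fin (n + 1) → ℕ)} :
    IsSolution n d G ↔ ∀ i j, i < j →
      IsLeast {x | ∃ g ∈ G, g i ≠ g j ∧ x = min (g i) (g j)} (dMin n d i j) := by
  refine forall₂_congr fun i j => imp_congr_right fun _ =>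
    ⟨fun ⟨⟨g, hg, hne⟩, h⟩ => ?_, fun h => ?_⟩
  · rw [← h]
    exact ⟨Nat.sInf_mem ⟨_, g, hg, hne, rfl⟩, fun x hx => Nat.sInf_le hx⟩
  · obtain ⟨g, hg, hne, -⟩ := h.1
    exact ⟨⟨g, hg, hne⟩, h.csInf_eq⟩

lemma IsMinRep.isSolution {σ : Type*} {n : ℕ} {d : Fin n → ℕ} {S : Finset σ}
    {x : σ → Fin (n + 1) → ℕ}
    (hx : IsMinRep (pathMin d) univ S x) : IsSolution n d (S.image x) := by
  refine isSolution_iff_isLeast.2 fun i j hij => ⟨?_, ?_⟩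
  · obtain ⟨s, hs, hne, heq⟩ := hx.exists_eq i (mem_univ _) j (mem_univ _) hij.ne
    exact ⟨x s, mem_image_of_mem _ hs, hne, by rw [heq, pathMin_of_lt d hij]⟩
  · rintro _ ⟨g, hg, hne, rfl⟩
    obtain ⟨s, -, rfl⟩ := mem_image.1 hg
    exact pathMin_of_lt d hij ▸ hx.le_min s i (mem_univ _) j (mem_univ _) hne

lemma card_le_two_pow_of_separating {α : Type*} [Fintype α] (G : Finset (α → ℕ))
    (hG : ∀ i j, i ≠ j → ∃ g ∈ G, g i ≠ g j ∧ min (g i) (g j) = 0) :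
    Fintype.card α ≤ 2 ^ G.card := by
  classical
  rw [← card_univ, ← card_powerset]
  refine card_le_card_of_injOn (fun i => {g ∈ G | g i = 0})
    (fun i _ => mem_powerset.2 (filter_subset _ _)) fun i _ j _ hij => ?_
  by_contra hne
  obtain ⟨g, hg, hgne, hmin⟩ := hG i j hne
  have := congrArg (g ∈ ·) hij
  simp only [mem_filter, hg, true_and, eq_iff_iff] at this
  omega

lemma IsSolution.exists_min_eq_zero {n : ℕ} {G : Finset (Fin (n + 1) → ℕ)}
    (hG : IsSolution n (fun _ => 0) G) :
    ∀ i j, i ≠ j → ∃ g ∈ G, g i ≠ g j ∧ min (g i) (g j) = 0 := by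
  have key : ∀ i j, i < j → ∃ g ∈ G, g i ≠ g j ∧ min (g i) (g j) = 0 := fun i j hij => by
    have h0 : dMin n (fun _ => 0) i j = 0 :=
      Nat.eq_zero_of_le_zero (dMin_le _ ⟨i, by omega⟩ le_rfl hij)
    obtain ⟨g, hg, hne, heq⟩ := h0 ▸ (isSolution_iff_isLeast.1 hG i j hij).1
    exact ⟨g, hg, hne, heq.symm⟩
  intro i j hij
  rcases hij.lt_or_gt with h | h
  · exact key i j h
  · obtain ⟨g, hg, hne, heq⟩ := key j i h
    exact ⟨g, hg, hne.symm, min_comm (g i) (g j) ▸ heq⟩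

theorem stmt_18_general (n : ℕ) :
    (∀ d : Fin n → ℕ, ∃ G : Finset (Fin (n + 1) → ℕ),
        IsSolution n d G ∧ G.card ≤ Nat.clog 2 (n + 1)) ∧
    (∃ d : Fin n → ℕ, ∀ G : Finset (Fin (n + 1) → ℕ),
        IsSolution n d G → Nat.clog 2 (n + 1) ≤ G.card) := by
  refine ⟨fun d => ?_, ⟨fun _ => 0, fun G hG => ?_⟩⟩
  · obtain ⟨x, -, hx⟩ := (isUltrametricSim_pathMin d).exists_isMinRep univ
      (range (Nat.clog 2 (n + 1))) 0 (by simpa using Nat.le_pow_clog one_lt_two (n + 1))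
      fun _ _ _ _ _ => Nat.zero_le _
    exact ⟨_, hx.isSolution, card_image_le.trans (card_range _).le⟩
  · exact Nat.clog_le_of_le_pow
      (by simpa using card_le_two_pow_of_separating G hG.exists_min_eq_zero)

theorem stmt_18 (n : ℕ) (hn : 1 ≤ n) :
    (∀ d : Fin n → ℕ, ∃ G : Finset (Fin (n + 1) → ℕ),
        IsSolution n d G ∧ G.card ≤ Nat.clog 2 (n + 1)) ∧
    (∃ d : Fin n → ℕ, ∀ G : Finset (Fin (n + 1) → ℕ),
        IsSolution n d G → Nat.clog 2 (n + 1) ≤ G.card) :=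
  stmt_18_general n
end

section
/- Let N ≥ 1 and let a multiset of requirements m_1, ..., m_r with each 1 ≤ m_p ≤ N be given, where for each m, the number of indices p with m_p ≥ m is at most ∑_{k=m}^N binom(N,k). Then there exist pairwise distinct vectors t_1, ..., t_r ∈ {0,1}^N such that the number of ones in t_p is at least m_p for every p. -/
/-!
A vector `t ∈ {0,1}^N` with `k` ones is the indicator of a `k`-subset of `Fin N`, so exactly
`∑_{k ≥ m} (N choose k)` vectors have at least `m` ones. The admissible vectors of a requirement
`m_p` thus form the up-set `{t | m_p ≤ #ones t}`, and these up-sets are nested. Hall's condition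
for a set `S` of requirements therefore only has to be checked against its smallest member `m`,
where it is exactly the counting hypothesis at `m`; Hall's marriage theorem then supplies the
distinct vectors.
-/

open Finset

section BoolVectors

variable {α : Type*} [Fintype α] [DecidableEq α]

theorem card_filter_card_filter_eq_choose (k : ℕ) :
    #{v : α → Bool | #{i | v i = true} = k} = (Fintype.card α).choose k := by
  rw [← card_univ, ← card_powersetCard]
  refine card_nbij' (fun v => ({i | v i = true} : Finset α)) (fun s i => decide (i ∈ s))
    (fun v hv => by simpa [mem_powersetCard] using hv)
    (fun s hs => by simpa [mem_powersetCard] using hs)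
    (fun v _ => funext fun i => by simp) (fun s _ => ext fun i => by simp)

theorem card_filter_le_card_filter_eq_sum_choose (m : ℕ) :
    #{v : α → Bool | m ≤ #{i | v i = true}} =
      ∑ k ∈ Icc m (Fintype.card α), (Fintype.card α).choose k := by
  have hweight_le (v : α → Bool) : #{i | v i = true} ≤ Fintype.card α :=
    (card_filter_le _ _).trans_eq card_univ
  rw [card_eq_sum_card_fiberwise (f := fun v : α → Bool => #{i | v i = true})
    (t := Icc m (Fintype.card α)) fun v hv => mem_Icc.2 ⟨(mem_filter.1 hv).2, hweight_le v⟩]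
  refine sum_congr rfl fun k hk => ?_
  rw [filter_filter, ← card_filter_card_filter_eq_choose k]
  congr 1
  exact filter_congr fun v _ =>
    ⟨fun h => h.2, fun h => ⟨(mem_Icc.1 hk).1.trans_eq h.symm, h⟩⟩

end BoolVectors

theorem exists_injective_le_of_card_filter_le {ι β : Type*} [Fintype ι] [Fintype β]
    [DecidableEq β] (w : β → ℕ) (m : ι → ℕ)
    (h : ∀ k, #{p | k ≤ m p} ≤ #{v | k ≤ w v}) :
    ∃ t : ι → β, Function.Injective t ∧ ∀ p, m p ≤ w (t p) := by
  set admissible : ι → Finset β := fun p => {v | m p ≤ w v}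
  have hall (s : Finset ι) : #s ≤ #(s.biUnion admissible) := by
    rcases s.eq_empty_or_nonempty with rfl | hs
    · simp
    obtain ⟨p₀, hp₀, hmin⟩ := s.exists_min_image m hs
    calc #s ≤ #{p | m p₀ ≤ m p} :=
          card_le_card fun p hp => mem_filter.2 ⟨mem_univ p, hmin p hp⟩
      _ ≤ #{v | m p₀ ≤ w v} := h (m p₀)
      _ ≤ #(s.biUnion admissible) :=
          card_le_card fun _ hv => mem_biUnion.2 ⟨p₀, hp₀, hv⟩
  obtain ⟨t, ht_inj, ht⟩ := (all_card_le_biUnion_card_iff_existsInjective' admissible).1 hall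
  exact ⟨t, ht_inj, fun p => (mem_filter.1 (ht p)).2⟩

theorem stmt_19_general (N r : ℕ) (m : Fin r → ℕ)
    (hcount : ∀ mm : ℕ,
      (Finset.univ.filter (fun p : Fin r => mm ≤ m p)).card ≤
        ∑ k ∈ Finset.Icc mm N, N.choose k) :
    ∃ t : Fin r → (Fin N → Bool), Function.Injective t ∧
      ∀ p, m p ≤ (Finset.univ.filter (fun i : Fin N => t p i = true)).card := by
  refine exists_injective_le_of_card_filter_le
    (fun v : Fin N → Bool => #{i | v i = true}) m fun k => ?_
  simpa only [card_filter_le_card_filter_eq_sum_choose, Fintype.card_fin] using hcount k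

theorem stmt_19 (N r : ℕ) (hN : 1 ≤ N) (m : Fin r → ℕ)
    (hm : ∀ p, 1 ≤ m p ∧ m p ≤ N)
    (hcount : ∀ mm : ℕ,
      (Finset.univ.filter (fun p : Fin r => mm ≤ m p)).card ≤
        ∑ k ∈ Finset.Icc mm N, N.choose k) :
    ∃ t : Fin r → (Fin N → Bool), Function.Injective t ∧
      ∀ p, m p ≤ (Finset.univ.filter (fun i : Fin N => t p i = true)).card :=
  stmt_19_general N r m hcount
end
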